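/- There exists an optimal schedule σ* in which the earlier-schedule jobs appear in increasing index order of start times, the later-schedule jobs appear in increasing index order of start times, and for every earlier-schedule idle time unit t of σ*, the earlier-schedule job J_j with the smallest start time among those with S_j(σ*) ≥ t+1 satisfies S_j(π*) ≥ T_2; that is, the job in the earlier schedule right after the idle time period has a starting time at or after time T_2 in π*. -/
import Mathlib


open Finset

variable (n : ℕ)

/-- Completion time of job `j` in the original WSPT schedule `π*`:
`C_j(π*) = p_1 + ⋯ + p_j`. -/
def Corig (p : Fin n → ℤ) (j : Fin n) : ℤ :=
  ∑ i ∈ Finset.univ.filter (fun i => i ≤ j), p i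

/-- Start time of job `j` in the original schedule `π*`. -/
def Sorig (p : Fin n → ℤ) (j : Fin n) : ℤ :=
  Corig n p j - p j

/-- A feasible schedule: integer start times `σ j ≥ 0`, pairwise disjoint open
processing intervals, and every job either completes by `T1` (earlier schedule)
or starts at or after `T2` (later schedule). -/
def Feasible (p : Fin n → ℤ) (T1 T2 : ℤ) (σ : Fin n → ℤ) : Prop :=
  (∀ j, 0 ≤ σ j) ∧
  (∀ i j, i ≠ j → σ i + p i ≤ σ j ∨ σ j + p j ≤ σ i) ∧
  (∀ j, σ j + p j ≤ T1 ∨ T2 ≤ σ j)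

/-- Time deviation of job `j`: `Δ_j(σ) = |C_j(σ) − C_j(π*)|`. -/
def Dev (p : Fin n → ℤ) (σ : Fin n → ℤ) (j : Fin n) : ℤ :=
  |σ j + p j - Corig n p j|

/-- Maximum time deviation `Δ_max(σ) = max_{1≤j≤n} Δ_j(σ)` (all deviations are
nonnegative, so folding `max` from `0` gives the maximum when `n ≥ 1`). -/
def Dmax (p : Fin n → ℤ) (σ : Fin n → ℤ) : ℤ :=
  Finset.fold max 0 (Dev n p σ) Finset.univ

/-- Admissible: feasible with `Δ_max(σ) ≤ k`. -/
def Admissible (p : Fin n → ℤ) (T1 T2 k : ℤ) (σ : Fin n → ℤ) : Prop :=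
  Feasible n p T1 T2 σ ∧ Dmax n p σ ≤ k

/-- Total weighted completion time `Σ_j w_j · C_j(σ)`. -/
def WObj (p w : Fin n → ℤ) (σ : Fin n → ℤ) : ℤ :=
  ∑ j, w j * (σ j + p j)

/-- The objective `Z(σ) = μ·Δ_max(σ) + Σ_j w_j·C_j(σ)`. -/
def Zval (p w : Fin n → ℤ) (μ : ℚ) (σ : Fin n → ℤ) : ℚ :=
  μ * (Dmax n p σ : ℚ) + (WObj n p w σ : ℚ)

/-- Optimal: admissible and minimizing `Z` over all admissible schedules. -/
def Optimal (p w : Fin n → ℤ) (T1 T2 k : ℤ) (μ : ℚ) (σ : Fin n → ℤ) : Prop :=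
  Admissible n p T1 T2 k σ ∧
  ∀ τ, Admissible n p T1 T2 k τ → Zval n p w μ σ ≤ Zval n p w μ τ

/-- `t ≥ 0` is an earlier-schedule idle time unit of `σ`: no job is processed
during `[t, t+1]` and some earlier-schedule job starts at or after `t+1`. -/
def IdleUnit (p : Fin n → ℤ) (T1 : ℤ) (σ : Fin n → ℤ) (t : ℤ) : Prop :=
  0 ≤ t ∧ (∀ m, ¬(σ m ≤ t ∧ t + 1 ≤ σ m + p m)) ∧
  ∃ j, σ j + p j ≤ T1 ∧ t + 1 ≤ σ j

lemma filter_le_eq (j : Fin n) : Finset.univ.filter (fun i : Fin n => i ≤ j) =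
    insert j (Finset.univ.filter (fun i => i < j)) := by
  ext x
  simp only [mem_filter, mem_univ, true_and, mem_insert]
  constructor
  · intro hx; exact eq_or_lt_of_le hx
  · rintro (rfl | hx)
    · exact le_refl _
    · exact le_of_lt hx

lemma corig_sorig (p : Fin n → ℤ) (j : Fin n) : Corig n p j = Sorig n p j + p j := by
  simp [Sorig]

lemma sorig_sum (p : Fin n → ℤ) (j : Fin n) :
    Sorig n p j = ∑ i ∈ Finset.univ.filter (fun i => i < j), p i := by
  have hj : j ∉ Finset.univ.filter (fun i : Fin n => i < j) := by simp
  rw [Sorig, Corig, filter_le_eq, Finset.sum_insert hj]; ring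

lemma sorig_mono (p : Fin n → ℤ) (hp : ∀ i, 0 < p i) {i j : Fin n} (hij : i ≤ j) :
    Sorig n p i ≤ Sorig n p j := by
  rw [sorig_sum, sorig_sum]
  apply Finset.sum_le_sum_of_subset_of_nonneg
  · intro x hx; simp only [mem_filter, mem_univ, true_and] at *
    exact lt_of_lt_of_le hx hij
  · intro x _ _; exact (hp x).le

lemma corig_add (p : Fin n → ℤ) (hp : ∀ i, 0 < p i) {i j : Fin n} (hij : i < j) :
    Corig n p i + p j ≤ Corig n p j := by
  have hj : j ∉ Finset.univ.filter (fun x : Fin n => x ≤ i) := by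
    simp only [mem_filter, mem_univ, true_and]; exact fun h => absurd hij (not_lt.mpr h)
  have hsub : insert j (Finset.univ.filter (fun x : Fin n => x ≤ i)) ⊆
      Finset.univ.filter (fun x : Fin n => x ≤ j) := by
    intro x hx
    rcases Finset.mem_insert.mp hx with rfl | hx
    · simp
    · simp only [mem_filter, mem_univ, true_and] at *; exact le_trans hx hij.le
  calc Corig n p i + p j = ∑ x ∈ insert j (Finset.univ.filter (fun x : Fin n => x ≤ i)), p x := by
        rw [Finset.sum_insert hj, Corig]; ring
    _ ≤ Corig n p j := Finset.sum_le_sum_of_subset_of_nonneg hsub (fun x _ _ => (hp x).le)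

lemma dev_le_dmax (p σ : Fin n → ℤ) (j : Fin n) : Dev n p σ j ≤ Dmax n p σ :=
  (Finset.le_fold_max _).2 (Or.inr ⟨j, mem_univ j, le_rfl⟩)

lemma dmax_nonneg (p σ : Fin n → ℤ) : 0 ≤ Dmax n p σ :=
  (Finset.le_fold_max _).2 (Or.inl le_rfl)

lemma dmax_le (p σ : Fin n → ℤ) (c : ℤ) (hc : 0 ≤ c) (h : ∀ j, Dev n p σ j ≤ c) :
    Dmax n p σ ≤ c :=
  (Finset.fold_max_le _).2 ⟨hc, fun x _ => h x⟩

/-- number of index-vs-time inversions -/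
def Phi (σ : Fin n → ℤ) : ℕ :=
  ((Finset.univ ×ˢ Finset.univ).filter
    (fun q : Fin n × Fin n => q.1 < q.2 ∧ σ q.2 < σ q.1)).card

lemma wobj_diff (p w σ τ : Fin n → ℤ) (s : Finset (Fin n))
    (h : ∀ m, m ∉ s → τ m = σ m) :
    WObj n p w τ - WObj n p w σ = ∑ m ∈ s, w m * (τ m - σ m) := by
  rw [WObj, WObj, ← Finset.sum_sub_distrib]
  rw [show (∑ m ∈ s, w m * (τ m - σ m)) = ∑ m, w m * (τ m - σ m) from
    Finset.sum_subset (Finset.subset_univ s) (fun x _ hx => by rw [h x hx]; ring)]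
  exact Finset.sum_congr rfl (fun x _ => by ring)

lemma pack (p σ : Fin n → ℤ) (hp : ∀ i, 0 < p i) :
    ∀ s : Finset (Fin n), ∀ t : ℤ, 0 ≤ t →
    (∀ i ∈ s, σ i + p i ≤ t) →
    (∀ i ∈ s, ∀ i' ∈ s, i < i' → σ i + p i ≤ σ i') →
    (∀ i ∈ s, 0 ≤ σ i) →
    ∑ i ∈ s, p i ≤ t := by
  intro s
  induction s using Finset.strongInduction with
  | _ s ih =>
    intro t ht hbd hmono hnn
    rcases s.eq_empty_or_nonempty with rfl | hne
    · simpa using ht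
    · set i0 := s.max' hne with hi0
      have hi0m : i0 ∈ s := s.max'_mem hne
      have hsub : s.erase i0 ⊂ s := Finset.erase_ssubset hi0m
      have h1 : ∑ i ∈ s.erase i0, p i ≤ σ i0 := by
        apply ih _ hsub _ (hnn i0 hi0m)
        · intro i hi
          have him : i ∈ s := Finset.mem_of_mem_erase hi
          have : i < i0 := lt_of_le_of_ne (s.le_max' i him) (Finset.ne_of_mem_erase hi)
          exact hmono i him i0 hi0m this
        · intro i hi i' hi' hii'
          exact hmono i (Finset.mem_of_mem_erase hi) i' (Finset.mem_of_mem_erase hi') hii'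
        · intro i hi; exact hnn i (Finset.mem_of_mem_erase hi)
      have h2 := Finset.sum_erase_add s p hi0m
      have h3 := hbd i0 hi0m
      linarith

lemma swap_step (p w : Fin n → ℤ) (T1 T2 k : ℤ) (μ : ℚ)
    (hp : ∀ j, 0 < p j) (hw : ∀ j, 0 < w j)
    (hwspt : ∀ i j : Fin n, i ≤ j → p i * w j ≤ p j * w i)
    (hμ : 0 ≤ μ) (σ : Fin n → ℤ)
    (hσ : Admissible n p T1 T2 k σ) (i j : Fin n) (hij : i < j)
    (hab : σ j < σ i)
    (hside : (σ i + p i ≤ T1 ∧ σ j + p j ≤ T1) ∨ (T2 ≤ σ i ∧ T2 ≤ σ j))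
    (hadj : ∀ m, m ≠ i → m ≠ j → σ m + p m ≤ σ j ∨ σ i + p i ≤ σ m) :
    ∃ τ, Admissible n p T1 T2 k τ ∧ Zval n p w μ τ ≤ Zval n p w μ σ ∧
      Phi n τ < Phi n σ := by
  obtain ⟨⟨hnn, hdisj, htri⟩, hdmax⟩ := hσ
  have hne : i ≠ j := ne_of_lt hij
  have hF1 : σ j + p j ≤ σ i := by
    rcases hdisj j i (Ne.symm hne) with h | h
    · exact h
    · exfalso; have := hp i; linarith
  set τ : Fin n → ℤ := fun m => if m = i then σ j else if m = j then σ j + p i else σ m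
    with hτdef
  have hτi : τ i = σ j := by simp [hτdef]
  have hτj : τ j = σ j + p i := by simp [hτdef, hne, Ne.symm hne]
  have hτm : ∀ m, m ≠ i → m ≠ j → τ m = σ m := by
    intro m h1 h2; simp [hτdef, h1, h2]
  -- position facts for other jobs
  have hpos : ∀ m, m ≠ i → m ≠ j →
      (σ m + p m ≤ σ j ∧ σ m < σ j ∧ σ m < σ i) ∨
      (σ i + p i ≤ σ m ∧ σ i < σ m ∧ σ j + p i < σ m) := by
    intro m h1 h2
    rcases hadj m h1 h2 with h | h
    · left; exact ⟨h, by have := hp m; linarith, by have := hp m; linarith⟩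
    · right; exact ⟨h, by have := hp i; linarith, by linarith⟩
  refine ⟨τ, ⟨⟨?_, ?_, ?_⟩, ?_⟩, ?_, ?_⟩
  · -- nonneg
    intro m
    by_cases h1 : m = i
    · rw [h1, hτi]; exact hnn j
    by_cases h2 : m = j
    · rw [h2, hτj]; have := hnn j; have := hp i; linarith
    · rw [hτm m h1 h2]; exact hnn m
  · -- disjoint
    intro x y hxy
    by_cases hxi : x = i
    · by_cases hyj : y = j
      · rw [hxi, hyj, hτi, hτj]; left; linarith
      · have hyi : y ≠ i := fun h => hxy (by rw [hxi, h])
        rw [hxi, hτi, hτm y hyi hyj]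
        rcases hpos y hyi hyj with ⟨h, _, _⟩ | ⟨h, _, _⟩
        · right; exact h
        · left; linarith
    by_cases hxj : x = j
    · by_cases hyi : y = i
      · rw [hxj, hyi, hτi, hτj]; right; linarith
      · have hyj : y ≠ j := fun h => hxy (by rw [hxj, h])
        rw [hxj, hτj, hτm y hyi hyj]
        rcases hpos y hyi hyj with ⟨h, _, _⟩ | ⟨h, _, _⟩
        · right; have := hp i; linarith
        · left; linarith
    · rw [hτm x hxi hxj]
      by_cases hyi : y = i
      · rw [hyi, hτi]
        rcases hpos x hxi hxj with ⟨h, _, _⟩ | ⟨h, _, _⟩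
        · left; exact h
        · right; have := hp i; linarith
      by_cases hyj : y = j
      · rw [hyj, hτj]
        rcases hpos x hxi hxj with ⟨h, _, _⟩ | ⟨h, _, _⟩
        · left; have := hp i; linarith
        · right; linarith
      · rw [hτm y hyi hyj]; exact hdisj x y hxy
  · -- trichotomy
    intro m
    by_cases h1 : m = i
    · rw [h1, hτi]
      rcases hside with ⟨ha, hb⟩ | ⟨ha, hb⟩
      · left; have := hp i; have := hp j; linarith
      · right; exact hb
    by_cases h2 : m = j
    · rw [h2, hτj]
      rcases hside with ⟨ha, hb⟩ | ⟨ha, hb⟩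
      · left; linarith
      · right; have := hp i; linarith
    · rw [hτm m h1 h2]; exact htri m
  · -- Dmax ≤ k
    refine le_trans (dmax_le n p τ (Dmax n p σ) (dmax_nonneg n p σ) ?_) hdmax
    intro m
    have hdi := dev_le_dmax n p σ i
    have hdj := dev_le_dmax n p σ j
    have habs_i1 : σ i + p i - Corig n p i ≤ Dev n p σ i := le_abs_self _
    have habs_i2 : Corig n p i - (σ i + p i) ≤ Dev n p σ i := by
      rw [Dev, abs_sub_comm]; exact le_abs_self _
    have habs_j1 : σ j + p j - Corig n p j ≤ Dev n p σ j := le_abs_self _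
    have habs_j2 : Corig n p j - (σ j + p j) ≤ Dev n p σ j := by
      rw [Dev, abs_sub_comm]; exact le_abs_self _
    have hso : Sorig n p i ≤ Sorig n p j := sorig_mono n p hp hij.le
    have hco : Corig n p i + p j ≤ Corig n p j := corig_add n p hp hij
    rw [Sorig, Sorig] at hso
    by_cases h1 : m = i
    · rw [h1, Dev, hτi, abs_le]
      constructor
      · linarith
      · linarith
    by_cases h2 : m = j
    · rw [h2, Dev, hτj, abs_le]
      have := hp i
      have := hp j
      constructor
      · linarith
      · linarith
    · rw [Dev, hτm m h1 h2]
      exact dev_le_dmax n p σ m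
  · -- Zval
    have hW : WObj n p w τ ≤ WObj n p w σ := by
      have hd := wobj_diff n p w σ τ {i, j} (by
        intro m hm
        simp only [Finset.mem_insert, Finset.mem_singleton] at hm
        push_neg at hm
        exact hτm m hm.1 hm.2)
      rw [Finset.sum_pair hne, hτi, hτj] at hd
      have h1 : p i * w j ≤ p j * w i := hwspt i j hij.le
      have h2 : w i * p j ≤ w i * (σ i - σ j) :=
        mul_le_mul_of_nonneg_left (by linarith) (hw i).le
      nlinarith
    have hD : Dmax n p τ ≤ Dmax n p σ := by
      apply dmax_le n p τ (Dmax n p σ) (dmax_nonneg n p σ)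
      intro m
      have hdi := dev_le_dmax n p σ i
      have hdj := dev_le_dmax n p σ j
      have habs_i1 : σ i + p i - Corig n p i ≤ Dev n p σ i := le_abs_self _
      have habs_j2 : Corig n p j - (σ j + p j) ≤ Dev n p σ j := by
        rw [Dev, abs_sub_comm]; exact le_abs_self _
      have hso : Sorig n p i ≤ Sorig n p j := sorig_mono n p hp hij.le
      have hco : Corig n p i + p j ≤ Corig n p j := corig_add n p hp hij
      rw [Sorig, Sorig] at hso
      by_cases h1 : m = i
      · rw [h1, Dev, hτi, abs_le]; exact ⟨by linarith, by linarith⟩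
      by_cases h2 : m = j
      · rw [h2, Dev, hτj, abs_le]
        have := hp i; have := hp j
        exact ⟨by linarith, by linarith⟩
      · rw [Dev, hτm m h1 h2]; exact dev_le_dmax n p σ m
    rw [Zval, Zval]
    have hc1 : (Dmax n p τ : ℚ) ≤ (Dmax n p σ : ℚ) := Int.cast_le.mpr hD
    have hc2 : (WObj n p w τ : ℚ) ≤ (WObj n p w σ : ℚ) := Int.cast_le.mpr hW
    have := mul_le_mul_of_nonneg_left hc1 hμ
    linarith
  · -- Phi
    apply Finset.card_lt_card
    rw [Finset.ssubset_iff_of_subset]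
    · refine ⟨(i, j), ?_, ?_⟩
      · simp only [Finset.mem_filter, Finset.mem_product, Finset.mem_univ, true_and]
        exact ⟨hij, hab⟩
      · simp only [Finset.mem_filter, Finset.mem_product, Finset.mem_univ, true_and,
          not_and, not_lt]
        intro _
        rw [hτi, hτj]
        have := hp i; linarith
    · intro q hq
      simp only [Finset.mem_filter, Finset.mem_product, Finset.mem_univ, true_and] at hq ⊢
      obtain ⟨hqlt, hqinv⟩ := hq
      refine ⟨hqlt, ?_⟩
      obtain ⟨x, y⟩ := q
      simp only at hqlt hqinv ⊢
      by_cases hxi : x = i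
      · by_cases hyj : y = j
        · rw [hxi, hyj]; exact hab
        · have hyi : y ≠ i := by rintro rfl; rw [hxi] at hqlt; exact absurd hqlt (lt_irrefl _)
          rw [hxi] at hqinv ⊢
          rw [hτm y hyi hyj, hτi] at hqinv
          rcases hpos y hyi hyj with ⟨_, h2, h3⟩ | ⟨_, h2, h3⟩
          · exact h3
          · exfalso; linarith
      by_cases hxj : x = j
      · have hyj : y ≠ j := by rintro rfl; rw [hxj] at hqlt; exact absurd hqlt (lt_irrefl _)
        have hyi : y ≠ i := by
          rintro rfl; rw [hxj] at hqlt; exact absurd hqlt (not_lt.mpr hij.le)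
        rw [hxj] at hqinv ⊢
        rw [hτm y hyi hyj, hτj] at hqinv
        rcases hpos y hyi hyj with ⟨_, h2, h3⟩ | ⟨_, h2, h3⟩
        · have := hp i; linarith
        · exfalso; linarith
      · rw [hτm x hxi hxj] at hqinv
        by_cases hyi : y = i
        · rw [hyi] at hqinv ⊢
          rw [hτi] at hqinv
          rcases hpos x hxi hxj with ⟨_, h2, h3⟩ | ⟨_, h2, h3⟩
          · exfalso; linarith
          · linarith
        by_cases hyj : y = j
        · rw [hyj] at hqinv ⊢
          rw [hτj] at hqinv
          rcases hpos x hxi hxj with ⟨_, h2, h3⟩ | ⟨_, h2, h3⟩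
          · exfalso; have := hp i; linarith
          · linarith
        · rw [hτm y hyi hyj] at hqinv; exact hqinv

lemma select (p : Fin n → ℤ) (T1 T2 : ℤ) (hp : ∀ i, 0 < p i) (σ : Fin n → ℤ)
    (hf : Feasible n p T1 T2 σ) (S : Fin n → Prop) [DecidablePred S]
    (hclose : ∀ m a b : Fin n, S a → S b → σ b < σ m → σ m + p m ≤ σ a → S m)
    (hex : ∃ i j : Fin n, i < j ∧ S i ∧ S j ∧ σ j < σ i) :
    ∃ i j : Fin n, i < j ∧ S i ∧ S j ∧ σ j < σ i ∧
      ∀ m, m ≠ i → m ≠ j → σ m + p m ≤ σ j ∨ σ i + p i ≤ σ m := by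
  obtain ⟨hnn, hdisj, htri⟩ := hf
  set P := (Finset.univ ×ˢ Finset.univ).filter
    (fun q : Fin n × Fin n => q.1 < q.2 ∧ S q.1 ∧ S q.2 ∧ σ q.2 < σ q.1) with hP
  have hPne : P.Nonempty := by
    obtain ⟨i, j, h1, h2, h3, h4⟩ := hex
    exact ⟨(i, j), by simp [hP, h1, h2, h3, h4]⟩
  obtain ⟨q, hqP, hqmin⟩ := Finset.exists_min_image P (fun q => σ q.1 - σ q.2) hPne
  obtain ⟨i, j⟩ := q
  simp only [hP, Finset.mem_filter, Finset.mem_product, Finset.mem_univ, true_and] at hqP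
  obtain ⟨hij, hSi, hSj, hinv⟩ := hqP
  refine ⟨i, j, hij, hSi, hSj, hinv, ?_⟩
  intro m hmi hmj
  by_contra hcon
  push_neg at hcon
  obtain ⟨h1, h2⟩ := hcon
  have hmj2 : σ j + p j ≤ σ m := by
    rcases hdisj m j hmj with h | h
    · exfalso; linarith
    · exact h
  have hmi2 : σ m + p m ≤ σ i := by
    rcases hdisj m i hmi with h | h
    · exact h
    · exfalso; linarith
  have hjm : σ j < σ m := by have := hp j; linarith
  have hmi3 : σ m < σ i := by have := hp m; linarith
  have hSm : S m := hclose m i j hSi hSj hjm hmi2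
  rcases lt_trichotomy m j with hmlt | heq | hmgt
  · have : (m, j) ∈ P := by simp [hP, hmlt, hSm, hSj, hjm]
    have := hqmin (m, j) this
    simp only at this
    linarith
  · exact hmj heq
  · have him : i < m := lt_trans hij hmgt
    have : (i, m) ∈ P := by simp [hP, him, hSm, hSi, hmi3]
    have := hqmin (i, m) this
    simp only at this
    linarith

/-- there exists an optimal schedule with both halves in WSPT
order, such that for every earlier-schedule idle time unit `t`, the
earlier-schedule job with the smallest start time among those starting at or
after `t+1` has `S_j(π*) ≥ T2`. -/
theorem stmt_5 (n : ℕ) (p w : Fin n → ℤ) (T1 T2 k : ℤ) (μ : ℚ)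
    (hn : 0 < n) (hp : ∀ j, 0 < p j) (hw : ∀ j, 0 < w j)
    (hwspt : ∀ i j : Fin n, i ≤ j → p i * w j ≤ p j * w i)
    (hT1 : 0 ≤ T1) (hT12 : T1 < T2) (hk : 0 ≤ k) (hμ : 0 ≤ μ)
    (hadm : ∃ σ, Admissible n p T1 T2 k σ) :
    ∃ σ, Optimal n p w T1 T2 k μ σ ∧
      (∀ i j : Fin n, i < j → σ i + p i ≤ T1 → σ j + p j ≤ T1 → σ i < σ j) ∧
      (∀ i j : Fin n, i < j → T2 ≤ σ i → T2 ≤ σ j → σ i < σ j) ∧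
      (∀ t : ℤ, IdleUnit n p T1 σ t →
        ∀ j, σ j + p j ≤ T1 → t + 1 ≤ σ j →
          (∀ j', σ j' + p j' ≤ T1 → t + 1 ≤ σ j' → σ j ≤ σ j') →
          T2 ≤ Sorig n p j) := by
  classical
  -- the set of admissible schedules is finite and nonempty
  have hAfin : {σ : Fin n → ℤ | Admissible n p T1 T2 k σ}.Finite := by
    apply Set.Finite.subset (Set.Finite.pi
      (t := fun j => Set.Icc (Corig n p j - p j - k) (Corig n p j - p j + k))
      (fun j => Set.finite_Icc _ _))
    intro σ hσ
    rw [Set.mem_pi]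
    intro j _
    have hd : Dev n p σ j ≤ k := le_trans (dev_le_dmax n p σ j) hσ.2
    rw [Dev, abs_le] at hd
    rw [Set.mem_Icc]
    constructor <;> linarith [hd.1, hd.2]
  have hne : hAfin.toFinset.Nonempty := by
    obtain ⟨σ, h⟩ := hadm
    exact ⟨σ, (Set.Finite.mem_toFinset hAfin).mpr h⟩
  obtain ⟨σ1, hσ1A, hσ1min⟩ := Finset.exists_min_image hAfin.toFinset (Zval n p w μ) hne
  obtain ⟨σ0, hσ0s, hσ0min⟩ := Finset.exists_min_image
    (hAfin.toFinset.filter (fun τ => Zval n p w μ τ ≤ Zval n p w μ σ1)) (Phi n)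
    ⟨σ1, Finset.mem_filter.mpr ⟨hσ1A, le_rfl⟩⟩
  rw [Finset.mem_filter, Set.Finite.mem_toFinset] at hσ0s
  obtain ⟨hadm0, hZ0le⟩ := hσ0s
  have hopt : ∀ τ, Admissible n p T1 T2 k τ → Zval n p w μ σ0 ≤ Zval n p w μ τ :=
    fun τ h => le_trans hZ0le (hσ1min τ ((Set.Finite.mem_toFinset hAfin).mpr h))
  have hphi : ∀ τ, Admissible n p T1 T2 k τ → Zval n p w μ τ ≤ Zval n p w μ σ0 →
      Phi n σ0 ≤ Phi n τ := by
    intro τ h hz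
    exact hσ0min τ (Finset.mem_filter.mpr
      ⟨(Set.Finite.mem_toFinset hAfin).mpr h, le_trans hz hZ0le⟩)
  have hnn : ∀ m, 0 ≤ σ0 m := hadm0.1.1
  have hdisj := hadm0.1.2.1
  have htri := hadm0.1.2.2
  have hdmax0 : Dmax n p σ0 ≤ k := hadm0.2
  -- property 1 : earlier-schedule jobs sorted by index
  have prop1 : ∀ i j : Fin n, i < j → σ0 i + p i ≤ T1 → σ0 j + p j ≤ T1 → σ0 i < σ0 j := by
    intro i j hij hi hj
    by_contra hle
    push_neg at hle
    have hstrict : σ0 j < σ0 i := by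
      rcases hdisj i j (ne_of_lt hij) with h | h
      · exfalso; have := hp i; linarith
      · have := hp j; linarith
    have hclose : ∀ m a b : Fin n, (σ0 a + p a ≤ T1) → (σ0 b + p b ≤ T1) →
        σ0 b < σ0 m → σ0 m + p m ≤ σ0 a → σ0 m + p m ≤ T1 := by
      intro m a b ha hb hbm hma
      rcases htri m with h | h
      · exact h
      · exfalso; have := hp a; have := hp m; linarith
    obtain ⟨i', j', hij', hSi', hSj', hinv', hadj'⟩ := select n p T1 T2 hp σ0 hadm0.1
      (fun x => σ0 x + p x ≤ T1) hclose ⟨i, j, hij, hi, hj, hstrict⟩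
    obtain ⟨τ, hτadm, hτZ, hτPhi⟩ := swap_step n p w T1 T2 k μ hp hw hwspt hμ σ0 hadm0
      i' j' hij' hinv' (Or.inl ⟨hSi', hSj'⟩) hadj'
    exact absurd (hphi τ hτadm hτZ) (not_le.mpr hτPhi)
  -- property 2 : later-schedule jobs sorted by index
  have prop2 : ∀ i j : Fin n, i < j → T2 ≤ σ0 i → T2 ≤ σ0 j → σ0 i < σ0 j := by
    intro i j hij hi hj
    by_contra hle
    push_neg at hle
    have hstrict : σ0 j < σ0 i := by
      rcases hdisj i j (ne_of_lt hij) with h | h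
      · exfalso; have := hp i; linarith
      · have := hp j; linarith
    have hclose : ∀ m a b : Fin n, (T2 ≤ σ0 a) → (T2 ≤ σ0 b) →
        σ0 b < σ0 m → σ0 m + p m ≤ σ0 a → T2 ≤ σ0 m := by
      intro m a b ha hb hbm hma
      linarith
    obtain ⟨i', j', hij', hSi', hSj', hinv', hadj'⟩ := select n p T1 T2 hp σ0 hadm0.1
      (fun x => T2 ≤ σ0 x) hclose ⟨i, j, hij, hi, hj, hstrict⟩
    obtain ⟨τ, hτadm, hτZ, hτPhi⟩ := swap_step n p w T1 T2 k μ hp hw hwspt hμ σ0 hadm0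
      i' j' hij' hinv' (Or.inr ⟨hSi', hSj'⟩) hadj'
    exact absurd (hphi τ hτadm hτZ) (not_le.mpr hτPhi)
  refine ⟨σ0, ⟨hadm0, hopt⟩, prop1, prop2, ?_⟩
  -- property 3 : idle time units
  intro t hidle j hje hjt hjmin
  by_contra hcon
  push_neg at hcon
  obtain ⟨ht0, hnoproc, -⟩ := hidle
  have hstepA : ∀ m, m ≠ j → σ0 m + p m ≤ t ∨ σ0 j + p j ≤ σ0 m := by
    intro m hm
    rcases hdisj m j hm with h | h
    · left
      have hmearly : σ0 m + p m ≤ T1 := by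
        rcases htri m with h' | h'
        · exact h'
        · exfalso; have := hp m; have := hp j; linarith
      have hmt : σ0 m ≤ t := by
        by_contra hmt
        push_neg at hmt
        have h1 : t + 1 ≤ σ0 m := by linarith
        have h2 := hjmin m hmearly h1
        have := hp m; linarith
      by_contra hc
      push_neg at hc
      exact hnoproc m ⟨hmt, by linarith [hc]⟩
    · right; exact h
  set τ := fun m => if m = j then σ0 j - 1 else σ0 m with hτdef
  have hτj : τ j = σ0 j - 1 := by simp [hτdef]
  have hτm : ∀ m, m ≠ j → τ m = σ0 m := by intro m hm; simp [hτdef, hm]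
  have hfeas : Feasible n p T1 T2 τ := by
    refine ⟨?_, ?_, ?_⟩
    · intro m
      by_cases h : m = j
      · rw [h, hτj]; linarith
      · rw [hτm m h]; exact hnn m
    · intro x y hxy
      by_cases hx : x = j
      · have hy : y ≠ j := fun h => hxy (by rw [hx, h])
        rw [hx, hτj, hτm y hy]
        rcases hstepA y hy with h | h
        · right; linarith
        · left; linarith
      by_cases hy : y = j
      · rw [hy, hτj, hτm x hx]
        rcases hstepA x hx with h | h
        · left; linarith
        · right; linarith
      · rw [hτm x hx, hτm y hy]; exact hdisj x y hxy
    · intro m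
      by_cases h : m = j
      · rw [h, hτj]; left; linarith
      · rw [hτm m h]; exact htri m
  have hdevj : Dev n p τ j ≤ Dmax n p σ0 := by
    rw [Dev, hτj]
    by_cases hC : Corig n p j < σ0 j + p j
    · rw [abs_of_nonneg (by linarith)]
      have h1 : σ0 j + p j - Corig n p j ≤ Dev n p σ0 j := le_abs_self _
      have h2 := dev_le_dmax n p σ0 j
      linarith
    · push_neg at hC
      set E := Finset.univ.filter (fun i : Fin n => i < j ∧ σ0 i + p i ≤ T1) with hE
      set L := Finset.univ.filter (fun i : Fin n => i < j ∧ T2 ≤ σ0 i) with hL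
      have hpackE : ∑ i ∈ E, p i ≤ t := by
        apply pack n p σ0 hp E t ht0
        · intro i hi
          rw [hE, Finset.mem_filter] at hi
          obtain ⟨-, hilt, hie⟩ := hi
          rcases hstepA i (ne_of_lt hilt) with h | h
          · exact h
          · exfalso; have := prop1 i j hilt hie hje; have := hp j; linarith
        · intro i hi i' hi' hii'
          rw [hE, Finset.mem_filter] at hi hi'
          have hlt := prop1 i i' hii' hi.2.2 hi'.2.2
          rcases hdisj i i' (ne_of_lt hii') with h | h
          · exact h
          · exfalso; have := hp i'; linarith
        · intro i _; exact hnn i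
      have hcs : Corig n p j = Sorig n p j + p j := corig_sorig n p j
      have hsplit : Sorig n p j = ∑ i ∈ E, p i + ∑ i ∈ L, p i := by
        have h1 : (Finset.univ.filter (fun i : Fin n => i < j)).filter
            (fun i => σ0 i + p i ≤ T1) = E := by
          rw [Finset.filter_filter, hE]
        have h2 : (Finset.univ.filter (fun i : Fin n => i < j)).filter
            (fun i => ¬(σ0 i + p i ≤ T1)) = L := by
          rw [Finset.filter_filter, hL]
          apply Finset.filter_congr
          intro x _
          constructor
          · rintro ⟨ha, hb⟩
            refine ⟨ha, ?_⟩
            rcases htri x with h | h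
            · exact absurd h hb
            · exact h
          · rintro ⟨ha, hb⟩
            refine ⟨ha, ?_⟩
            have := hp x
            intro h3
            linarith
        rw [sorig_sum, ← h1, ← h2]
        exact (Finset.sum_filter_add_sum_filter_not _ _ _).symm
      have hkey : Corig n p j - (σ0 j + p j) ≤ (∑ i ∈ L, p i) - 1 := by
        linarith [hpackE, hjt]
      have hLne : L.Nonempty := by
        rw [Finset.nonempty_iff_ne_empty]
        intro h
        rw [h, Finset.sum_empty] at hkey
        linarith
      obtain ⟨-, hi0lt, hi0T2⟩ := Finset.mem_filter.mp (L.min'_mem hLne)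
      have hsub2 : Sorig n p (L.min' hLne) + ∑ i ∈ L, p i ≤ Sorig n p j := by
        rw [sorig_sum, sorig_sum]
        have hdisjLU : Disjoint (Finset.univ.filter (fun i : Fin n => i < L.min' hLne)) L := by
          rw [Finset.disjoint_left]
          intro a ha haL
          rw [Finset.mem_filter] at ha
          exact absurd (L.min'_le a haL) (not_le.mpr ha.2)
        rw [← Finset.sum_union hdisjLU]
        apply Finset.sum_le_sum_of_subset_of_nonneg
        · intro x hx
          rw [Finset.mem_union] at hx
          rcases hx with hx | hx
          · rw [Finset.mem_filter] at hx ⊢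
            exact ⟨hx.1, lt_trans hx.2 hi0lt⟩
          · rw [hL, Finset.mem_filter] at hx
            rw [Finset.mem_filter]
            exact ⟨hx.1, hx.2.1⟩
        · intro x _ _; exact (hp x).le
      have hdevi0 : T2 - Sorig n p (L.min' hLne) ≤ Dmax n p σ0 := by
        have h1 := dev_le_dmax n p σ0 (L.min' hLne)
        have h2 : σ0 (L.min' hLne) + p (L.min' hLne) - Corig n p (L.min' hLne) ≤
            Dev n p σ0 (L.min' hLne) := le_abs_self _
        have h3 : Corig n p (L.min' hLne) = Sorig n p (L.min' hLne) + p (L.min' hLne) :=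
          corig_sorig n p _
        linarith
      rw [abs_of_nonpos (by linarith)]
      linarith
  have hDτ : Dmax n p τ ≤ Dmax n p σ0 := by
    apply dmax_le n p τ _ (dmax_nonneg n p σ0)
    intro m
    by_cases h : m = j
    · rw [h]; exact hdevj
    · rw [Dev, hτm m h]; exact dev_le_dmax n p σ0 m
  have hτadm : Admissible n p T1 T2 k τ := ⟨hfeas, le_trans hDτ hdmax0⟩
  have hWτ : WObj n p w τ - WObj n p w σ0 = -(w j) := by
    have hd := wobj_diff n p w σ0 τ {j} (fun m hm => hτm m (by simpa using hm))
    rw [Finset.sum_singleton, hτj] at hd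
    rw [hd]; ring
  have hZτ : Zval n p w μ τ < Zval n p w μ σ0 := by
    rw [Zval, Zval]
    have hc1 : (Dmax n p τ : ℚ) ≤ (Dmax n p σ0 : ℚ) := Int.cast_le.mpr hDτ
    have hc2 : (WObj n p w τ : ℚ) < (WObj n p w σ0 : ℚ) := by
      have : WObj n p w τ < WObj n p w σ0 := by have := hw j; linarith
      exact_mod_cast this
    have := mul_le_mul_of_nonneg_left hc1 hμ
    linarith
  exact absurd (hopt τ hτadm) (not_le.mpr hZτ)
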